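/- For every integer N with 1 ≤ N ≤ 6, the identity 1/2 + ∑_{n=1}^∞ ∏_{k=0}^N sinc(n/(2k+1)) = ∫_0^∞ ∏_{k=0}^N sinc(x/(2k+1)) dx holds. -/

import Mathlib

/-!
The function `f x = ∏ₖ sinc (x / (2k+1))` is the Fourier transform of the convolution of the boxes
`π a · 𝟙[-1/(2πa), 1/(2πa)]`, `a = 2k+1`, which is supported in `[-σ, σ]` with
`σ = ∑ₖ 1/(2π(2k+1))`. For `N ≤ 6` we have `σ < 1`, so the Fourier transform of the product vanishes
at every nonzero integer, and Poisson summation turns `∑_{n ∈ ℤ} f n` into `∫ f`. For `N ≥ 1` two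
factors give decay `O(1/x²)`, enough for Poisson summation; evenness of `f` then halves both sides.
-/

open MeasureTheory Real

noncomputable def sinc' (x : ℝ) : ℝ := if x = 0 then 1 else Real.sin x / x

open Complex Set Filter FourierTransform Convolution
open scoped Pointwise Topology

lemma sinc'_eq_sinc : sinc' = sinc := rfl

namespace Real

lemma abs_sinc_le_two_div (x : ℝ) : |sinc x| ≤ 2 / (1 + |x|) := by
  rcases le_or_gt |x| 1 with hx | hx
  · exact (abs_sinc_le_one x).trans ((one_le_div (by positivity)).2 (by linarith))
  · have hx0 : x ≠ 0 := abs_pos.1 (by linarith)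
    calc |sinc x| = |sin x| / |x| := by rw [sinc_of_ne_zero hx0, abs_div]
      _ ≤ 1 / |x| := by gcongr; exact abs_sin_le_one x
      _ ≤ 2 / (1 + |x|) := by rw [div_le_div_iff₀ (by linarith) (by linarith)]; linarith

lemma abs_sinc_div_le {a : ℝ} (ha : 1 ≤ a) (x : ℝ) : |sinc (x / a)| ≤ 2 * a / (1 + |x|) := by
  have ha0 : 0 < a := by linarith
  calc |sinc (x / a)| ≤ 2 / (1 + |x / a|) := abs_sinc_le_two_div _
    _ = 2 * a / (a + |x|) := by rw [abs_div, abs_of_pos ha0]; field_simp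
    _ ≤ 2 * a / (1 + |x|) := by gcongr

lemma abs_prod_sinc_div_le {ι : Type*} {s : Finset ι} {a : ι → ℝ} (ha : ∀ i ∈ s, 1 ≤ a i)
    {i j : ι} (hi : i ∈ s) (hj : j ∈ s) (hij : i ≠ j) (x : ℝ) :
    |∏ k ∈ s, sinc (x / a k)| ≤ 4 * a i * a j * (1 + |x|) ^ (-2 : ℝ) := by
  classical
  have hj' : j ∈ s.erase i := Finset.mem_erase.2 ⟨hij.symm, hj⟩
  have hbi := abs_sinc_div_le (ha i hi) x
  have hbj := abs_sinc_div_le (ha j hj) x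
  have hrest : ∏ k ∈ (s.erase i).erase j, |sinc (x / a k)| ≤ 1 :=
    Finset.prod_le_one (fun _ _ => abs_nonneg _) fun _ _ => abs_sinc_le_one _
  rw [Finset.abs_prod, ← Finset.mul_prod_erase _ _ hi, ← Finset.mul_prod_erase _ _ hj',
    Real.rpow_neg (by positivity), Real.rpow_two]
  calc |sinc (x / a i)| * (|sinc (x / a j)| * ∏ k ∈ (s.erase i).erase j, |sinc (x / a k)|)
      ≤ (2 * a i / (1 + |x|)) * ((2 * a j / (1 + |x|)) * 1) := by
        gcongr
        exacts [(abs_nonneg _).trans hbi, (abs_nonneg _).trans hbj]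
    _ = 4 * a i * a j * ((1 + |x|) ^ 2)⁻¹ := by field_simp; ring

end Real

lemma integral_exp_const_mul_I_eq_sinc (c r : ℝ) :
    ∫ t in -r..r, cexp (c * t * I) = 2 * r * sinc (c * r) := by
  rcases eq_or_ne c 0 with rfl | hc
  · simp [two_mul]
  · have := intervalIntegral.integral_comp_mul_left (fun t : ℝ => cexp (t * I)) hc (a := -r) (b := r)
    simp only [ofReal_mul] at this
    rw [this, mul_neg, integral_exp_mul_I_eq_sinc, real_smul]
    have hc' : (c : ℂ) ≠ 0 := ofReal_ne_zero.2 hc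
    push_cast
    field_simp

noncomputable def sincBox (a : ℝ) : ℝ → ℂ :=
  (Metric.closedBall (0 : ℝ) (2 * π * a)⁻¹).indicator fun _ => (π * a : ℂ)

lemma integrable_sincBox (a : ℝ) : Integrable (sincBox a) :=
  (integrable_indicator_iff Metric.isClosed_closedBall.measurableSet).2
    (integrableOn_const measure_closedBall_lt_top.ne)

lemma support_sincBox_subset (a : ℝ) :
    Function.support (sincBox a) ⊆ Metric.closedBall 0 (2 * π * a)⁻¹ :=
  support_indicator_subset

lemma fourier_sincBox {a : ℝ} (ha : 0 < a) (x : ℝ) : 𝓕 (sincBox a) x = sinc (x / a) := by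
  have hr : 0 ≤ (2 * π * a)⁻¹ := by positivity
  calc 𝓕 (sincBox a) x
      = ∫ v in -(2 * π * a)⁻¹..(2 * π * a)⁻¹, (π * a : ℂ) * cexp ((-2 * π * x : ℝ) * v * I) := by
        rw [Real.fourier_real_eq_integral_exp_smul, intervalIntegral.integral_of_le (by linarith),
          ← integral_Icc_eq_integral_Ioc, ← integral_indicator measurableSet_Icc]
        congr 1 with v
        simp only [sincBox, Real.closedBall_eq_Icc, zero_sub, zero_add, indicator_apply]
        split_ifs <;> simp only [smul_eq_mul, mul_zero]
        push_cast
        ring_nf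
    _ = sinc (x / a) := by
        have hπ : (π : ℂ) ≠ 0 := ofReal_ne_zero.2 pi_ne_zero
        have ha' : (a : ℂ) ≠ 0 := ofReal_ne_zero.2 ha.ne'
        rw [intervalIntegral.integral_const_mul, integral_exp_const_mul_I_eq_sinc,
          show -2 * π * x * (2 * π * a)⁻¹ = -(x / a) by field_simp, sinc_neg]
        push_cast
        field_simp

theorem exists_fourier_eq_prod_sinc {ι : Type*} {s : Finset ι} (hs : s.Nonempty) {a : ι → ℝ}
    (ha : ∀ i ∈ s, 0 < a i) :
    ∃ F : ℝ → ℂ, Integrable F ∧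
      Function.support F ⊆ Metric.closedBall 0 (∑ i ∈ s, (2 * π * a i)⁻¹) ∧
      ∀ x, 𝓕 F x = ∏ i ∈ s, (sinc (x / a i) : ℂ) := by
  induction hs using Finset.Nonempty.cons_induction with
  | singleton i =>
    simp only [Finset.mem_singleton, forall_eq] at ha
    exact ⟨sincBox (a i), integrable_sincBox _, by simpa using support_sincBox_subset _,
      by simpa using fourier_sincBox ha⟩
  | cons i s hi hs ih =>
    obtain ⟨hai, has⟩ := (Finset.forall_mem_cons hi _).1 ha
    obtain ⟨F, hFi, hFs, hFf⟩ := ih has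
    refine ⟨sincBox (a i) ⋆[ContinuousLinearMap.mul ℂ ℂ] F,
      (integrable_sincBox _).integrable_convolution _ hFi, ?_, fun x => ?_⟩
    · have hr : 0 ≤ (2 * π * a i)⁻¹ := inv_nonneg.2 (mul_pos two_pi_pos hai).le
      have hR : 0 ≤ ∑ j ∈ s, (2 * π * a j)⁻¹ :=
        Finset.sum_nonneg fun j hj => inv_nonneg.2 (mul_pos two_pi_pos (has j hj)).le
      calc _ ⊆ Function.support (sincBox (a i)) + Function.support F :=
            MeasureTheory.support_convolution_subset _
        _ ⊆ Metric.closedBall 0 (2 * π * a i)⁻¹ + Metric.closedBall 0 (∑ j ∈ s, (2 * π * a j)⁻¹) :=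
          add_subset_add (support_sincBox_subset _) hFs
        _ = _ := by rw [closedBall_add_closedBall hr hR, add_zero, Finset.sum_cons]
    · rw [Real.fourier_mul_convolution_eq (integrable_sincBox _) hFi, fourier_sincBox hai, hFf,
        Finset.prod_cons]

lemma fourier_fourier_eq_zero_of_support_subset {F : ℝ → ℂ} (hF : Integrable F)
    (hFF : Integrable (𝓕 F)) {c ξ : ℝ} (hsupp : Function.support F ⊆ Metric.closedBall 0 c)
    (hξ : c < |ξ|) : 𝓕 (𝓕 F) ξ = 0 := by
  have hzero : F =ᶠ[𝓝 (-ξ)] 0 := by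
    filter_upwards [Metric.isClosed_closedBall.isOpen_compl.mem_nhds
      (by simpa [abs_neg] using hξ : -ξ ∉ Metric.closedBall 0 c)] with y hy
    exact Function.notMem_support.1 fun h => hy (hsupp h)
  rw [← neg_neg ξ, ← Real.fourierInv_eq_fourier_neg,
    hF.fourierInv_fourier_eq hFF (continuousAt_const.congr hzero.symm)]
  exact hzero.eq_of_nhds

lemma isBigO_one_add_abs_rpow_neg {b : ℝ} (hb : 0 ≤ b) :
    (fun x : ℝ => (1 + |x|) ^ (-b)) =O[cocompact ℝ] (|·| ^ (-b)) := by
  refine Asymptotics.IsBigO.of_bound 1 ?_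
  filter_upwards [(isCompact_singleton (x := (0 : ℝ))).compl_mem_cocompact] with x hx
  have hx : 0 < |x| := abs_pos.2 hx
  rw [one_mul, Real.norm_of_nonneg (by positivity), Real.norm_of_nonneg (by positivity)]
  exact Real.rpow_le_rpow_of_nonpos hx (by linarith) (by linarith)

/-- Poisson summation for a function whose spectrum lies inside `(-1, 1)`. -/
theorem hasSum_int_fourier_of_support_subset {F : ℝ → ℂ} (hF : Integrable F) {c : ℝ}
    (hc : c < 1) (hsupp : Function.support F ⊆ Metric.closedBall 0 c) {b : ℝ} (hb : 1 < b)
    (hdecay : 𝓕 F =O[cocompact ℝ] fun x => (1 + |x|) ^ (-b)) :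
    HasSum (fun n : ℤ => 𝓕 F n) (∫ x, 𝓕 F x) := by
  have hcont : Continuous (𝓕 F) :=
    VectorFourier.fourierIntegral_continuous Real.continuous_fourierChar (by fun_prop) hF
  have hFF : Integrable (𝓕 F) := hcont.locallyIntegrable.integrable_of_isBigO_cocompact hdecay
    ((integrable_one_add_norm (by simpa using hb)).integrableAtFilter _)
  have hO := hdecay.trans (isBigO_one_add_abs_rpow_neg (by linarith))
  have hvanish : ∀ n : ℤ, n ≠ 0 → 𝓕 (𝓕 F) n = 0 := fun n hn =>
    fourier_fourier_eq_zero_of_support_subset hF hFF hsupp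
      (hc.trans_le (by exact_mod_cast Int.one_le_abs hn))
  have hpoisson := Real.tsum_eq_tsum_fourier_of_rpow_decay_of_summable hcont hb hO
    (summable_of_ne_finset_zero (s := {0}) fun n hn => hvanish n (by simpa using hn)) 0
  simp only [zero_add, QuotientAddGroup.mk_zero, fourier_eval_zero, mul_one] at hpoisson
  rw [tsum_eq_single 0 hvanish, Int.cast_zero, Real.fourier_real_eq] at hpoisson
  simp only [mul_zero, neg_zero, AddChar.map_zero_eq_one, one_smul] at hpoisson
  rw [← hpoisson]
  exact (summable_of_isBigO (Real.summable_abs_int_rpow hb)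
    (hO.comp_tendsto Int.tendsto_coe_cofinite)).hasSum

theorem Function.Even.half_add_tsum_eq_integral_Ioi {f : ℝ → ℝ} (hf : f.Even)
    (h : HasSum (fun n : ℤ => f n) (∫ x, f x)) :
    f 0 / 2 + ∑' n : ℕ, f (n + 1) = ∫ x in Ioi 0, f x := by
  have hZ := tsum_int_eq_zero_add_two_mul_tsum_pnat (f := fun n : ℤ => f n)
    (fun n => by simpa using hf n) h.summable
  rw [h.tsum_eq, tsum_pnat_eq_tsum_succ (f := fun n : ℕ => f (n : ℤ))] at hZ
  have hint : ∫ x, f x = 2 * ∫ x in Ioi 0, f x := by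
    rw [← integral_comp_abs]
    congr 1 with x
    rcases abs_choice x with h | h <;> rw [h]
    exact (hf x).symm
  push_cast at hZ
  rw [two_nsmul] at hZ
  linarith

lemma sum_range_inv_two_pi_mul_odd_lt_one {N : ℕ} (hN : N ≤ 6) :
    ∑ k ∈ Finset.range (N + 1), (2 * π * (2 * k + 1))⁻¹ < 1 := by
  calc ∑ k ∈ Finset.range (N + 1), (2 * π * (2 * k + 1))⁻¹
      ≤ ∑ k ∈ Finset.range 7, (2 * π * (2 * k + 1))⁻¹ :=
        Finset.sum_le_sum_of_subset_of_nonneg (Finset.range_subset_range.2 (by omega))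
          fun _ _ _ => by positivity
    _ = (2 * π)⁻¹ * ∑ k ∈ Finset.range 7, ((2 * k + 1 : ℝ))⁻¹ := by
        rw [Finset.mul_sum]; simp_rw [mul_inv]
    _ < 1 := by
        rw [inv_mul_lt_one₀ (by positivity)]
        norm_num [Finset.sum_range_succ]
        linarith [pi_gt_three]

theorem sinc_sum_eq_integral_le_six (N : ℕ) (h1 : 1 ≤ N) (h6 : N ≤ 6) :
    1 / 2 + ∑' n : ℕ, ∏ k ∈ Finset.range (N + 1),
        sinc' ((n + 1 : ℝ) / (2 * k + 1)) =
      ∫ x in Set.Ioi (0:ℝ), ∏ k ∈ Finset.range (N + 1),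
        sinc' (x / (2 * k + 1)) := by
  set f : ℝ → ℝ := fun x => ∏ k ∈ Finset.range (N + 1), sinc (x / (2 * k + 1))
  have hodd : ∀ k ∈ Finset.range (N + 1), 1 ≤ (2 * k + 1 : ℝ) := fun k _ => by
    linarith [k.cast_nonneg (α := ℝ)]
  obtain ⟨F, hFi, hFs, hFf⟩ := exists_fourier_eq_prod_sinc Finset.nonempty_range_add_one
    fun k hk => zero_lt_one.trans_le (hodd k hk)
  have hFf' : ∀ x, 𝓕 F x = f x := fun x => by rw [hFf, ofReal_prod]
  have hdecay : 𝓕 F =O[cocompact ℝ] fun x => (1 + |x|) ^ (-2 : ℝ) := by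
    refine Asymptotics.IsBigO.of_bound 12 (Eventually.of_forall fun x => ?_)
    rw [hFf', norm_real, Real.norm_eq_abs, Real.norm_eq_abs,
      abs_of_nonneg (Real.rpow_nonneg (by positivity) _)]
    refine (abs_prod_sinc_div_le hodd (i := 0) (j := 1) (by simp) (Finset.mem_range.2 (by omega)) zero_ne_one
      x).trans_eq ?_
    norm_num
  have hsum : HasSum (fun n : ℤ => f n) (∫ x, f x) := by
    have := hasSum_int_fourier_of_support_subset hFi (sum_range_inv_two_pi_mul_odd_lt_one h6)
      hFs one_lt_two hdecay
    simp_rw [hFf', integral_complex_ofReal] at this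
    exact_mod_cast this
  have heven : f.Even := fun x => by simp [f, neg_div, sinc_neg]
  have h0 : f 0 = 1 := by simp [f]
  simpa [h0, sinc'_eq_sinc] using heven.half_add_tsum_eq_integral_Ioi hsum
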